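/- Let A ⊂ ℝ^m be nonempty and compact, and let f : [0,T]×ℝⁿ×A → ℝⁿ and l : [0,T]×ℝⁿ×A → ℝ be continuous in a for every (t,x). Assume that the set f(t,x,A) is convex for every (t,x). Define H(t,x,p) := sup_{a∈A}(⟨p, f(t,x,a)⟩ − l(t,x,a)) and L(t,x,·) := H*(t,x,·). Then f(t,x,A) = dom L(t,x,·) for all t ∈ [0,T], x ∈ ℝⁿ. -/

import Mathlib

open Filter Topology MeasureTheory Set Metric
open scoped RealInnerProductSpace Pointwise

noncomputable section

abbrev Eucl (n : ℕ) := EuclideanSpace ℝ (Fin n)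

/-- Legendre–Fenchel transform in the last variable of a real-valued Hamiltonian:
`LFT H t x v = sup_p (⟪v,p⟫ − H t x p)`, with values in `EReal = ℝ ∪ {±∞}`. -/
def LFT {n : ℕ} (H : ℝ → Eucl n → Eucl n → ℝ) (t : ℝ) (x v : Eucl n) : EReal :=
  ⨆ p : Eucl n, ((⟪v, p⟫ - H t x p : ℝ) : EReal)

/-- Epigraph `E_L(t,x) = {(v,η) | L(t,x,v) ≤ η}` of the Lagrangian `L = LFT H`. -/
def epiL {n : ℕ} (H : ℝ → Eucl n → Eucl n → ℝ) (t : ℝ) (x : Eucl n) : Set (Eucl n × ℝ) :=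
  {q | LFT H t x q.1 ≤ (q.2 : EReal)}

/-- Legendre–Fenchel conjugate of an extended-real-valued function. -/
def eConj {n : ℕ} (φ : Eucl n → EReal) (v : Eucl n) : EReal :=
  ⨆ p : Eucl n, (((⟪v, p⟫ : ℝ) : EReal) - φ p)

/-- A modulus: `w(·,r)` measurable, `w(t,·)` nonnegative, nondecreasing, continuous,
subadditive with `w(t,0) = 0`. -/
def IsModulus (w : ℝ → ℝ → ℝ) : Prop :=
  (∀ r, Measurable fun t => w t r) ∧
  ∀ t, (∀ r, 0 ≤ w t r) ∧ Monotone (w t) ∧ Continuous (w t) ∧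
    (∀ a b : ℝ, 0 ≤ a → 0 ≤ b → w t (a + b) ≤ w t a + w t b) ∧ w t 0 = 0

/-- Convexity of an `EReal`-valued function. -/
def EConvex {F : Type*} [AddCommMonoid F] [Module ℝ F] (φ : F → EReal) : Prop :=
  ∀ v u : F, ∀ a b : ℝ, 0 ≤ a → 0 ≤ b → a + b = 1 →
    φ (a • v + b • u) ≤ (a : EReal) * φ v + (b : EReal) * φ u

/-- A proper extended-real-valued function: never `−∞` and not identically `+∞`. -/
def EProper {F : Type*} (φ : F → EReal) : Prop :=
  (∀ v, φ v ≠ ⊥) ∧ ∃ v, φ v ≠ ⊤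

/-! Each `a ∈ A` gives the affine minorant `p ↦ ⟪p, f a⟫ - l a` of `H`, so `L (f a) ≤ l a < ∞`.
Conversely, a point `v` outside the compact convex set `f(A)` is strictly separated from it by
some `p`; along the ray `s • p`, `H` grows at most like `s * sup ⟪p, f(A)⟫ - min l`, while
`⟪v, s • p⟫` grows strictly faster, so `L v = ∞`. -/

section

variable {E X : Type*} [NormedAddCommGroup E] [InnerProductSpace ℝ E]

theorem exists_inner_lt_of_notMem_of_convex [CompleteSpace E] {K : Set E} (hK : Convex ℝ K)
    (hKc : IsClosed K) {v : E} (hv : v ∉ K) :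
    ∃ (p : E) (u : ℝ), (∀ w ∈ K, ⟪p, w⟫ < u) ∧ u < ⟪p, v⟫ := by
  obtain ⟨φ, u, hφK, hφv⟩ := geometric_hahn_banach_closed_point hK hKc hv
  refine ⟨(InnerProductSpace.toDual ℝ E).symm φ, u, ?_, ?_⟩ <;>
    simpa only [InnerProductSpace.toDual_symm_apply]

def fenchelConj (h : E → ℝ) (v : E) : EReal :=
  ⨆ p, ((⟪v, p⟫ - h p : ℝ) : EReal)

theorem fenchelConj_le_of_forall_le {h : E → ℝ} {w : E} {s : ℝ}
    (hle : ∀ p, ⟪p, w⟫ - s ≤ h p) : fenchelConj h w ≤ s :=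
  iSup_le fun p => EReal.coe_le_coe_iff.mpr (by linarith [hle p, real_inner_comm p w])

theorem fenchelConj_eq_top_of_le {h : E → ℝ} {v p : E} {u C : ℝ} (hu : u < ⟪p, v⟫)
    (hle : ∀ s : ℝ, 0 ≤ s → h (s • p) ≤ s * u + C) : fenchelConj h v = ⊤ := by
  rw [fenchelConj, EReal.eq_top_iff_forall_lt]
  intro r
  set s := max ((r + C) / (⟪p, v⟫ - u) + 1) 0
  have hgap : r + C < s * (⟪p, v⟫ - u) := by
    have hs : (r + C) / (⟪p, v⟫ - u) + 1 ≤ s := le_max_left _ _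
    rw [← div_lt_iff₀ (sub_pos.mpr hu)]
    linarith
  refine (EReal.coe_lt_coe_iff.mpr ?_).trans_le (le_iSup_of_le (s • p) le_rfl)
  have := hle s (le_max_right _ _)
  rw [real_inner_smul_right, real_inner_comm]
  linarith

def hamiltonian (A : Set X) (g : X → E) (c : X → ℝ) (p : E) : ℝ :=
  sSup ((fun a => ⟪p, g a⟫ - c a) '' A)

variable [TopologicalSpace X] {A : Set X} {g : X → E} {c : X → ℝ}

theorem le_hamiltonian (hAc : IsCompact A) (hg : ContinuousOn g A) (hc : ContinuousOn c A)
    {a : X} (ha : a ∈ A) (p : E) : ⟪p, g a⟫ - c a ≤ hamiltonian A g c p := by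
  have hcont : ContinuousOn (fun a => ⟪p, g a⟫ - c a) A :=
    (continuousOn_const.inner hg).sub hc
  exact le_csSup (hAc.image_of_continuousOn hcont).bddAbove ⟨a, ha, rfl⟩

theorem image_eq_fenchelConj_hamiltonian_ne_top [CompleteSpace E] (hA : A.Nonempty)
    (hAc : IsCompact A) (hg : ContinuousOn g A) (hc : ContinuousOn c A)
    (hconv : Convex ℝ (g '' A)) :
    g '' A = {v | fenchelConj (hamiltonian A g c) v ≠ ⊤} := by
  ext v
  constructor
  · rintro ⟨a, ha, rfl⟩
    exact ne_top_of_le_ne_top (EReal.coe_ne_top (c a))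
      (fenchelConj_le_of_forall_le fun p => le_hamiltonian hAc hg hc ha p)
  · intro hv
    by_contra hvA
    obtain ⟨p, u, hpA, hu⟩ :=
      exists_inner_lt_of_notMem_of_convex hconv (hAc.image_of_continuousOn hg).isClosed hvA
    obtain ⟨a₀, -, ha₀⟩ := hAc.exists_isMinOn hA hc
    refine hv (fenchelConj_eq_top_of_le hu (C := -c a₀) fun s hs => ?_)
    refine csSup_le (hA.image _) ?_
    rintro _ ⟨a, ha, rfl⟩
    have hpa : s * ⟪p, g a⟫ ≤ s * u := mul_le_mul_of_nonneg_left (hpA _ ⟨a, ha, rfl⟩).le hs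
    have hca : c a₀ ≤ c a := ha₀ ha
    simp only [real_inner_smul_left]
    linarith

end

theorem image_eq_domain_general (n m : ℕ) (T : ℝ)
    (A : Set (Eucl m)) (hA : A.Nonempty) (hAc : IsCompact A)
    (f : ℝ → Eucl n → Eucl m → Eucl n) (l : ℝ → Eucl n → Eucl m → ℝ)
    (hfc : ∀ t ∈ Icc (0 : ℝ) T, ∀ x : Eucl n, ContinuousOn (fun a => f t x a) A)
    (hlc : ∀ t ∈ Icc (0 : ℝ) T, ∀ x : Eucl n, ContinuousOn (fun a => l t x a) A)
    (hconv : ∀ t ∈ Icc (0 : ℝ) T, ∀ x : Eucl n, Convex ℝ ((fun a => f t x a) '' A))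
    (H : ℝ → Eucl n → Eucl n → ℝ)
    (hH : ∀ (t : ℝ) (x p : Eucl n),
      H t x p = sSup ((fun a => ⟪p, f t x a⟫ - l t x a) '' A)) :
    ∀ t ∈ Icc (0 : ℝ) T, ∀ x : Eucl n,
      (fun a => f t x a) '' A = {v : Eucl n | LFT H t x v ≠ ⊤} := by
  intro t ht x
  have hHt : H t x = hamiltonian A (f t x) (l t x) := funext (hH t x)
  rw [image_eq_fenchelConj_hamiltonian_ne_top hA hAc (hfc t ht x) (hlc t ht x) (hconv t ht x),
    ← hHt]
  rfl

/-- Lemma 4.2 of the paper. If `A` is nonempty and compact, `f, l` are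
continuous in `a`, the image `f(t,x,A)` is convex, and
`H(t,x,p) = sup_{a∈A}(⟨p, f(t,x,a)⟩ − l(t,x,a))`, then `f(t,x,A) = dom L(t,x,·)`
for all `t ∈ [0,T]` and `x`, where `L = H*`. -/
theorem image_eq_domain (n m : ℕ) (T : ℝ) (hT : 0 ≤ T)
    (A : Set (Eucl m)) (hA : A.Nonempty) (hAc : IsCompact A)
    (f : ℝ → Eucl n → Eucl m → Eucl n) (l : ℝ → Eucl n → Eucl m → ℝ)
    (hfc : ∀ t ∈ Icc (0 : ℝ) T, ∀ x : Eucl n, ContinuousOn (fun a => f t x a) A)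
    (hlc : ∀ t ∈ Icc (0 : ℝ) T, ∀ x : Eucl n, ContinuousOn (fun a => l t x a) A)
    (hconv : ∀ t ∈ Icc (0 : ℝ) T, ∀ x : Eucl n, Convex ℝ ((fun a => f t x a) '' A))
    (H : ℝ → Eucl n → Eucl n → ℝ)
    (hH : ∀ (t : ℝ) (x p : Eucl n),
      H t x p = sSup ((fun a => ⟪p, f t x a⟫ - l t x a) '' A)) :
    ∀ t ∈ Icc (0 : ℝ) T, ∀ x : Eucl n,
      (fun a => f t x a) '' A = {v : Eucl n | LFT H t x v ≠ ⊤} :=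
  image_eq_domain_general n m T A hA hAc f l hfc hlc hconv H hH
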